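/- arXiv:2601.03766 — 5 statements merged into one kernel-verified Lean document; each statement's English description precedes it below -/
import Mathlib

section
/- Let B be a nonempty paracyclic-ordered ℤ-set. Then for every b ∈ B the half-open interval [b, 1 +ᵥ b) = {x ∈ B : b ≤ x < 1 +ᵥ b} contains at most one element of each ℤ-orbit; in particular this interval is finite, and every element of B has an immediate successor in the linear order. -/
open CategoryTheory

structure ParacyclicZSet where
  carrier : Type
  [linOrd : LinearOrder carrier]
  [addAction : AddAction ℤ carrier]
  free : ∀ (n : ℤ) (b : carrier), n +ᵥ b = b → n = 0
  finOrbits : Finite (Quotient (AddAction.orbitRel ℤ carrier))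
  lt_one_vadd : ∀ b : carrier, b < (1 : ℤ) +ᵥ b
  one_vadd_mono : Monotone (fun b : carrier => (1 : ℤ) +ᵥ b)
  cofinal : ∀ b b' : carrier, ∃ n : ℤ, b' ≤ n +ᵥ b

attribute [instance] ParacyclicZSet.linOrd ParacyclicZSet.addAction

instance : Category ParacyclicZSet where
  Hom B C := {g : B.carrier → C.carrier //
    (∀ (n : ℤ) (b : B.carrier), g (n +ᵥ b) = n +ᵥ g b) ∧ Monotone g}
  id B := ⟨id, fun _ _ => rfl, monotone_id⟩
  comp f g := ⟨g.1 ∘ f.1, fun n b => by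
      simp only [Function.comp_apply, f.2.1, g.2.1], g.2.2.comp f.2.2⟩
  id_comp f := Subtype.ext rfl
  comp_id f := Subtype.ext rfl
  assoc f g h := Subtype.ext rfl

/-- vadd by a nonnegative integer does not decrease. -/
lemma ParacyclicZSet.le_vadd (B : ParacyclicZSet) (n : ℤ) (hn : 0 ≤ n)
    (y : B.carrier) : y ≤ n +ᵥ y := by
  lift n to ℕ using hn
  induction n with
  | zero => simp
  | succ k ih =>
    have h : ((k + 1 : ℕ) : ℤ) +ᵥ y = (1 : ℤ) +ᵥ ((k : ℤ) +ᵥ y) := by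
      rw [← add_vadd]; norm_num; ring_nf
    rw [h]
    exact ih.trans (B.lt_one_vadd _).le

/-- vadd by an integer `≥ 1` dominates `1 +ᵥ ·`. -/
lemma ParacyclicZSet.one_vadd_le_vadd (B : ParacyclicZSet) (n : ℤ) (hn : 1 ≤ n)
    (y : B.carrier) : (1 : ℤ) +ᵥ y ≤ n +ᵥ y := by
  have h : n +ᵥ y = (1 : ℤ) +ᵥ ((n - 1) +ᵥ y) := by
    rw [← add_vadd]; ring_nf
  rw [h]
  exact B.one_vadd_mono (B.le_vadd (n - 1) (by omega) y)

lemma ParacyclicZSet.key (B : ParacyclicZSet) (b : B.carrier) :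
    ∀ x ∈ Set.Ico b ((1 : ℤ) +ᵥ b), ∀ y ∈ Set.Ico b ((1 : ℤ) +ᵥ b),
      x ∈ AddAction.orbit ℤ y → x = y := by
  rintro x ⟨hx1, hx2⟩ y ⟨hy1, hy2⟩ ⟨n, rfl⟩
  simp only at hx1 hx2 ⊢
  rcases lt_trichotomy n 0 with hn | hn | hn
  · exfalso
    have h1 : b ≤ n +ᵥ y := hx1
    have h2 : (1 : ℤ) +ᵥ b ≤ (1 : ℤ) +ᵥ (n +ᵥ y) := B.one_vadd_mono h1
    have h3 : (1 : ℤ) +ᵥ (n +ᵥ y) ≤ (-n) +ᵥ (n +ᵥ y) :=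
      B.one_vadd_le_vadd (-n) (by omega) _
    have h4 : (-n) +ᵥ (n +ᵥ y) = y := by
      rw [← add_vadd, neg_add_cancel, zero_vadd]
    exact absurd (h2.trans (h3.trans_eq h4)) (not_le.mpr hy2)
  · rw [hn, zero_vadd]
  · exfalso
    have h2 : (1 : ℤ) +ᵥ b ≤ (1 : ℤ) +ᵥ y := B.one_vadd_mono hy1
    have h3 : (1 : ℤ) +ᵥ y ≤ n +ᵥ y := B.one_vadd_le_vadd n (by omega) _
    exact absurd (h2.trans h3) (not_le.mpr hx2)

lemma ParacyclicZSet.ico_finite (B : ParacyclicZSet) (b : B.carrier) :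
    (Set.Ico b ((1 : ℤ) +ᵥ b)).Finite := by
  haveI := B.finOrbits
  have hinj : Set.InjOn (Quotient.mk (AddAction.orbitRel ℤ B.carrier))
      (Set.Ico b ((1 : ℤ) +ᵥ b)) := by
    intro x hx y hy hxy
    exact B.key b x hx y hy (Quotient.eq.mp hxy)
  exact Set.Finite.of_finite_image (Set.toFinite _) hinj

/-- In a nonempty paracyclic-ordered `ℤ`-set `B`, for every `b ∈ B` the half-open interval
`[b, 1 +ᵥ b)` contains at most one element of each `ℤ`-orbit; in particular this interval is
finite, and every element of `B` has an immediate successor in the linear order. -/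
theorem paracyclic_interval (B : ParacyclicZSet) (hne : Nonempty B.carrier)
    (b : B.carrier) :
    (∀ x ∈ Set.Ico b ((1 : ℤ) +ᵥ b), ∀ y ∈ Set.Ico b ((1 : ℤ) +ᵥ b),
      x ∈ AddAction.orbit ℤ y → x = y) ∧
    (Set.Ico b ((1 : ℤ) +ᵥ b)).Finite ∧
    (∀ x : B.carrier, ∃ c, x ⋖ c) := by
  refine ⟨B.key b, B.ico_finite b, fun x => ?_⟩
  have hT : (Set.Ioc x ((1 : ℤ) +ᵥ x)).Finite := by
    have : Set.Ioc x ((1 : ℤ) +ᵥ x) ⊆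
        insert ((1 : ℤ) +ᵥ x) (Set.Ico x ((1 : ℤ) +ᵥ x)) := by
      rintro z ⟨hz1, hz2⟩
      rcases eq_or_lt_of_le hz2 with h | h
      · exact Or.inl h
      · exact Or.inr ⟨hz1.le, h⟩
    exact ((B.ico_finite x).insert _).subset this
  have hTne : (Set.Ioc x ((1 : ℤ) +ᵥ x)).Nonempty :=
    ⟨(1 : ℤ) +ᵥ x, B.lt_one_vadd x, le_rfl⟩
  obtain ⟨c, hc, hmin⟩ := Set.exists_min_image _ id hT hTne
  refine ⟨c, hc.1, fun z hxz hzc => ?_⟩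
  exact absurd (hmin z ⟨hxz, (hzc.trans_le hc.2).le⟩) (not_le.mpr hzc)
end

section
/- Let A be a free ℤ-set with finitely many orbits. The fully faithful inclusion 𝒞′_A ↪ 𝒞_A admits a right adjoint, which sends an object (B, f) to (f(A), f), where the image f(A) ⊆ B is endowed with the restricted linear order and ℤ-action (this makes f(A) a paracyclic-ordered ℤ-set), and whose counit at (B, f) is given by the subset inclusion f(A) ↪ B. -/
/-!
Every morphism `(B', f') ⟶ (B, f)` with `f'` surjective lands in `f(A)`, so it corestricts to a
morphism into `(f(A), f)`; since the inclusion `f(A) ↪ B` is injective, hence mono, the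
factorization is unique. Thus the inclusion is a terminal object of the comma category
`𝒞′_A ↓ (B, f)` for every `(B, f)`, and these terminal objects assemble into a right adjoint.
-/

open CategoryTheory

/-- An object of the category `𝒞_A`: an object `B` of `Λ∞` together with a
`ℤ`-equivariant map `f : A → B`. -/
structure CObj (A : Type) [AddAction ℤ A] where
  B : ParacyclicZSet
  f : A → B.carrier
  equivariant : ∀ (n : ℤ) (a : A), f (n +ᵥ a) = n +ᵥ f a

instance (A : Type) [AddAction ℤ A] : Category (CObj A) where
  Hom x y := {g : x.B ⟶ y.B // g.1 ∘ x.f = y.f}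
  id x := ⟨𝟙 x.B, rfl⟩
  comp {x y z} g h := ⟨g.1 ≫ h.1, by
    show h.1.1 ∘ (g.1.1 ∘ x.f) = z.f
    rw [g.2, h.2]⟩
  id_comp f := Subtype.ext (Category.id_comp f.1)
  comp_id f := Subtype.ext (Category.comp_id f.1)
  assoc f g h := Subtype.ext (Category.assoc f.1 g.1 h.1)

/-- The category `𝒞′_A`: the full subcategory of `𝒞_A` spanned by the `(B, f)` with `f`
surjective. -/
abbrev CSurj (A : Type) [AddAction ℤ A] : Type 1 :=
  CategoryTheory.ObjectProperty.FullSubcategory (fun x : CObj A => Function.Surjective x.f)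

variable {A : Type} [AddAction ℤ A]

theorem range_closed (x : CObj A) (n : ℤ) (b : x.B.carrier) (hb : b ∈ Set.range x.f) :
    n +ᵥ b ∈ Set.range x.f := by
  obtain ⟨a, rfl⟩ := hb
  exact ⟨n +ᵥ a, x.equivariant n a⟩

instance imgAction (x : CObj A) : AddAction ℤ (Set.range x.f) where
  vadd n y := ⟨n +ᵥ y.1, range_closed x n y.1 y.2⟩
  zero_vadd y := Subtype.ext (zero_vadd ℤ y.1)
  add_vadd m n y := Subtype.ext (add_vadd m n y.1)

/-- The image `f(A) ⊆ B`, endowed with the restricted linear order and `ℤ`-action, as a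
paracyclic-ordered `ℤ`-set.  (Finiteness of the set of orbits uses that `A` has finitely
many orbits.) -/
def imageParacyclic (hA : Finite (Quotient (AddAction.orbitRel ℤ A))) (x : CObj A) :
    ParacyclicZSet where
  carrier := Set.range x.f
  free n y h := x.B.free n y.1 (congrArg Subtype.val h)
  finOrbits := by
    have hsurj : Function.Surjective
        (fun q : Quotient (AddAction.orbitRel ℤ A) =>
          (Quotient.map (fun a => (⟨x.f a, ⟨a, rfl⟩⟩ : Set.range x.f))
            (by
              rintro a a' ⟨n, rfl⟩
              exact ⟨n, Subtype.ext (x.equivariant n a').symm⟩) q :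
            Quotient (AddAction.orbitRel ℤ (Set.range x.f)))) := by
      rintro q
      induction q using Quotient.ind with
      | _ y =>
        obtain ⟨b, a, rfl⟩ := y
        exact ⟨Quotient.mk _ a, rfl⟩
    exact Finite.of_surjective _ hsurj
  lt_one_vadd y := by
    have := x.B.lt_one_vadd y.1
    exact Subtype.coe_lt_coe.mp this
  one_vadd_mono y z h := by
    have := x.B.one_vadd_mono (Subtype.coe_le_coe.mpr h)
    exact Subtype.coe_le_coe.mp this
  cofinal y z := by
    obtain ⟨n, hn⟩ := x.B.cofinal y.1 z.1
    exact ⟨n, Subtype.coe_le_coe.mp hn⟩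

/-- The object `(f(A), f)` of `𝒞_A` associated with an object `(B, f)`. -/
def imageObj (hA : Finite (Quotient (AddAction.orbitRel ℤ A))) (x : CObj A) : CObj A where
  B := imageParacyclic hA x
  f a := ⟨x.f a, ⟨a, rfl⟩⟩
  equivariant n a := Subtype.ext (x.equivariant n a)

/-- The subset inclusion `f(A) ↪ B`, as a morphism `(f(A), f) → (B, f)` of `𝒞_A`. -/
def inclHom (hA : Finite (Quotient (AddAction.orbitRel ℤ A))) (x : CObj A) :
    imageObj hA x ⟶ x :=
  ⟨⟨Subtype.val, fun _ _ => rfl, fun _ _ h => h⟩, rfl⟩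

open Limits

lemma CObj.hom_ext {x y : CObj A} {g g' : x ⟶ y} (h : ∀ b, g.1.1 b = g'.1.1 b) : g = g' :=
  Subtype.ext (Subtype.ext (funext h))

lemma imageObj_surjective (hA : Finite (Quotient (AddAction.orbitRel ℤ A))) (x : CObj A) :
    Function.Surjective (imageObj hA x).f := by
  rintro ⟨b, a, rfl⟩
  exact ⟨a, rfl⟩

instance inclHom_mono (hA : Finite (Quotient (AddAction.orbitRel ℤ A))) (x : CObj A) :
    Mono (inclHom hA x) :=
  ⟨fun _ _ h => CObj.hom_ext fun b =>
    Subtype.ext (congrFun (congrArg (fun k : _ ⟶ x => k.1.1) h) b)⟩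

lemma mem_range_of_surjective {x y : CObj A} (hy : Function.Surjective y.f) (g : y ⟶ x)
    (b : y.B.carrier) : g.1.1 b ∈ Set.range x.f := by
  obtain ⟨a, rfl⟩ := hy b
  exact ⟨a, (congrFun g.2 a).symm⟩

def restrictHom (hA : Finite (Quotient (AddAction.orbitRel ℤ A))) {x y : CObj A}
    (hy : Function.Surjective y.f) (g : y ⟶ x) : y ⟶ imageObj hA x :=
  ⟨⟨fun b => ⟨g.1.1 b, mem_range_of_surjective hy g b⟩,
    fun n b => Subtype.ext (g.1.2.1 n b), fun _ _ h => g.1.2.2 h⟩,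
    funext fun a => Subtype.ext (congrFun g.2 a)⟩

lemma restrictHom_comp_inclHom (hA : Finite (Quotient (AddAction.orbitRel ℤ A)))
    {x y : CObj A} (hy : Function.Surjective y.f) (g : y ⟶ x) :
    restrictHom hA hy g ≫ inclHom hA x = g :=
  rfl

lemma existsUnique_comp_inclHom (hA : Finite (Quotient (AddAction.orbitRel ℤ A)))
    {x y : CObj A} (hy : Function.Surjective y.f) (g : y ⟶ x) :
    ∃! g' : y ⟶ imageObj hA x, g' ≫ inclHom hA x = g :=
  ⟨restrictHom hA hy g, restrictHom_comp_inclHom hA hy g,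
    fun _ h => (cancel_mono (inclHom hA x)).1 (h.trans (restrictHom_comp_inclHom hA hy g).symm)⟩

def isTerminalInclHom (hA : Finite (Quotient (AddAction.orbitRel ℤ A))) (x : CObj A) :
    IsTerminal (CostructuredArrow.mk
      (S := ObjectProperty.ι fun x : CObj A => Function.Surjective x.f)
      (Y := ⟨imageObj hA x, imageObj_surjective hA x⟩) (inclHom hA x)) :=
  IsTerminal.ofUniqueHom
    (fun g => CostructuredArrow.homMk (ObjectProperty.homMk (restrictHom hA g.left.2 g.hom))
      (restrictHom_comp_inclHom hA g.left.2 g.hom))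
    (fun g m => CostructuredArrow.hom_ext _ _ (InducedCategory.hom_ext
      ((existsUnique_comp_inclHom hA g.left.2 g.hom).unique (CostructuredArrow.w m) rfl)))

theorem image_right_adjoint_general (A : Type) [AddAction ℤ A]
    (hA : Finite (Quotient (AddAction.orbitRel ℤ A))) :
    (∀ x : CObj A,
      Function.Surjective (imageObj hA x).f ∧
      ∀ y : CObj A, Function.Surjective y.f →
        ∀ g : y ⟶ x, ∃! g' : y ⟶ imageObj hA x, g' ≫ inclHom hA x = g) ∧
    (CategoryTheory.ObjectProperty.ι
        (fun x : CObj A => Function.Surjective x.f)).IsLeftAdjoint := by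
  have : ∀ x : CObj A, HasTerminal (CostructuredArrow (ObjectProperty.ι _) x) :=
    fun x => (isTerminalInclHom hA x).hasTerminal
  exact ⟨fun x => ⟨imageObj_surjective hA x, fun _ hy g => existsUnique_comp_inclHom hA hy g⟩,
    isLeftAdjoint_of_costructuredArrowTerminals _⟩

/-- Let `A` be a free `ℤ`-set with finitely many orbits.  The fully faithful inclusion
`𝒞′_A ↪ 𝒞_A` admits a right adjoint sending `(B, f)` to `(f(A), f)` (the image with the
restricted order and `ℤ`-action), with counit given by the subset inclusion `f(A) ↪ B`:
for every `x = (B, f)` in `𝒞_A`, the object `(f(A), f)` lies in `𝒞′_A`, and the inclusion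
morphism `inclHom` is universal among morphisms to `x` from objects of `𝒞′_A`.  In
particular the inclusion functor is a left adjoint. -/
theorem image_right_adjoint (A : Type) [AddAction ℤ A]
    (hfree : ∀ (n : ℤ) (a : A), n +ᵥ a = a → n = 0)
    (hA : Finite (Quotient (AddAction.orbitRel ℤ A))) :
    (∀ x : CObj A,
      Function.Surjective (imageObj hA x).f ∧
      ∀ y : CObj A, Function.Surjective y.f →
        ∀ g : y ⟶ x, ∃! g' : y ⟶ imageObj hA x, g' ≫ inclHom hA x = g) ∧
    (CategoryTheory.ObjectProperty.ι
        (fun x : CObj A => Function.Surjective x.f)).IsLeftAdjoint :=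
  image_right_adjoint_general A hA
end

section
/- For every free ℤ-set A with finitely many orbits, the category 𝒞′_A is connected: it is nonempty, and any two of its objects can be joined by a finite zigzag of morphisms. -/
open CategoryTheory

/-!
Every paracyclic-ordered `ℤ`-set `B` admits a monotone equivariant map to `ℤ`: measure `b` by the
largest `z` with `z +ᵥ b₀ ≤ b`. Hence every object of `𝒞_A` maps to some `(ℤ, h)`. Two equivariant
`h, h' : A → ℤ` differ by an invariant function, which is bounded because `A` has finitely many
orbits; so `h` and `max h h'` are joined by finitely many steps `k ≤ k' ≤ k + 1`, and each such step
is a span out of `(ℤ, k + k')`, with `n` acting on `ℤ` by adding `2 * n`. Thus `𝒞_A` is connected.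
Taking images (the range of `f` is again paracyclic) is a functor `𝒞_A ⥤ 𝒞′_A` that every object
of `𝒞′_A` maps into, and this transfers connectedness; freeness gives an equivariant `A → ℤ`, whence
an object of `𝒞′_A`.
-/

namespace ParacyclicZSet

variable (B : ParacyclicZSet)

theorem strictMono_vadd_left (b : B.carrier) : StrictMono fun n : ℤ => n +ᵥ b :=
  strictMono_int_of_lt_succ fun n => by
    simpa only [add_comm n 1, add_vadd] using B.lt_one_vadd (n +ᵥ b)

theorem vadd_le_vadd_iff (n : ℤ) {a b : B.carrier} : n +ᵥ a ≤ n +ᵥ b ↔ a ≤ b := by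
  have one : ∀ {a b : B.carrier}, (1 : ℤ) +ᵥ a ≤ (1 : ℤ) +ᵥ b ↔ a ≤ b :=
    (B.one_vadd_mono.strictMono_of_injective (AddAction.injective 1)).le_iff_le
  induction n using Int.induction_on with
  | zero => simp only [zero_vadd]
  | succ n ih => rw [add_comm, add_vadd, add_vadd, one]; exact ih
  | pred n ih =>
    rw [← one, ← add_vadd, ← add_vadd, show 1 + (-(n : ℤ) - 1) = -n by ring]
    exact ih

theorem vadd_lt_vadd_iff (n : ℤ) {a b : B.carrier} : n +ᵥ a < n +ᵥ b ↔ a < b := by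
  simp only [← not_le, B.vadd_le_vadd_iff]

theorem exists_vadd_le (b b' : B.carrier) : ∃ n : ℤ, n +ᵥ b ≤ b' := by
  obtain ⟨n, hn⟩ := B.cofinal b' b
  exact ⟨-n, by simpa only [neg_vadd_vadd] using (B.vadd_le_vadd_iff (-n)).2 hn⟩

theorem exists_vadd_le_lt (b₀ b : B.carrier) : ∃ z : ℤ, z +ᵥ b₀ ≤ b ∧ b < (z + 1) +ᵥ b₀ := by
  obtain ⟨N, hN⟩ := B.cofinal b₀ b
  obtain ⟨z, hz, hmax⟩ := Int.exists_greatest_of_bdd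
    ⟨N, fun z hz => (B.strictMono_vadd_left b₀).le_iff_le.1 (hz.trans hN)⟩ (B.exists_vadd_le b₀ b)
  exact ⟨z, hz, lt_of_not_ge fun h => by linarith [hmax _ h]⟩

theorem eq_of_vadd_le_lt {b₀ b : B.carrier} {z z' : ℤ} (h : z +ᵥ b₀ ≤ b ∧ b < (z + 1) +ᵥ b₀)
    (h' : z' +ᵥ b₀ ≤ b ∧ b < (z' + 1) +ᵥ b₀) : z = z' := by
  have := (B.strictMono_vadd_left b₀).lt_iff_lt.1 (h.1.trans_lt h'.2)
  have := (B.strictMono_vadd_left b₀).lt_iff_lt.1 (h'.1.trans_lt h.2)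
  omega

noncomputable def floor (b₀ b : B.carrier) : ℤ := (B.exists_vadd_le_lt b₀ b).choose

theorem floor_spec (b₀ b : B.carrier) :
    B.floor b₀ b +ᵥ b₀ ≤ b ∧ b < (B.floor b₀ b + 1) +ᵥ b₀ :=
  (B.exists_vadd_le_lt b₀ b).choose_spec

theorem floor_vadd (b₀ b : B.carrier) (n : ℤ) : B.floor b₀ (n +ᵥ b) = B.floor b₀ b + n := by
  obtain ⟨hle, hlt⟩ := B.floor_spec b₀ b
  refine B.eq_of_vadd_le_lt (B.floor_spec b₀ _) ⟨?_, ?_⟩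
  · rwa [add_comm, add_vadd, B.vadd_le_vadd_iff]
  · rwa [add_right_comm, add_comm, add_vadd, B.vadd_lt_vadd_iff]

theorem floor_mono (b₀ : B.carrier) : Monotone (B.floor b₀) := fun b b' hb => by
  have := (B.strictMono_vadd_left b₀).lt_iff_lt.1
    (((B.floor_spec b₀ b).1.trans hb).trans_lt (B.floor_spec b₀ b').2)
  omega

def intScaled (k : ℤ) (hk : 0 < k) : ParacyclicZSet where
  carrier := ℤ
  addAction :=
    { vadd := fun n m => m + k * n
      zero_vadd := fun m => show m + k * 0 = m by ring
      add_vadd := fun n n' m => show m + k * (n + n') = m + k * n' + k * n by ring }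
  free n m h := by
    have : m + k * n = m := h
    simpa [hk.ne'] using this
  finOrbits := by
    refine Finite.of_surjective (fun r : Fin k.toNat => ⟦((r : ℕ) : ℤ)⟧) fun q => ?_
    induction q using Quotient.inductionOn with | h m =>
    have := Int.emod_lt_of_pos m hk
    refine ⟨⟨(m % k).toNat, by omega⟩, Quotient.sound ⟨-(m / k), ?_⟩⟩
    change m + k * -(m / k) = ((m % k).toNat : ℤ)
    have := Int.mul_ediv_add_emod m k
    rw [Int.toNat_of_nonneg (Int.emod_nonneg m hk.ne')]
    linarith
  lt_one_vadd m := show m < m + k * 1 by omega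
  one_vadd_mono m m' h := show m + k * 1 ≤ m' + k * 1 by omega
  cofinal m m' := ⟨|m' - m|, show m' ≤ m + k * |m' - m| by
    nlinarith [le_abs_self (m' - m), abs_nonneg (m' - m)]⟩

theorem exists_monotone_int_equivariant :
    ∃ g : B.carrier → ℤ, (∀ (n : ℤ) (b : B.carrier), g (n +ᵥ b) = g b + n) ∧ Monotone g := by
  rcases isEmpty_or_nonempty B.carrier with hB | ⟨⟨b₀⟩⟩
  · exact ⟨isEmptyElim, fun _ b => isEmptyElim b, fun b => isEmptyElim b⟩
  · exact ⟨B.floor b₀, fun n b => B.floor_vadd b₀ b n, B.floor_mono b₀⟩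

def ofSubAddAction (S : SubAddAction ℤ B.carrier) : ParacyclicZSet where
  carrier := S
  free n x h := B.free n x (congrArg Subtype.val h)
  finOrbits := by
    have := B.finOrbits
    refine Finite.of_injective (β := Quotient (AddAction.orbitRel ℤ B.carrier))
      (Quotient.map' (Subtype.val : S → B.carrier) fun x y h => ?_) fun p q h => ?_
    · rwa [SubAddAction.orbitRel_of_subAdd] at h
    · induction p using Quotient.inductionOn with | h x =>
      induction q using Quotient.inductionOn with | h y =>
      have : (⟦x.1⟧ : Quotient (AddAction.orbitRel ℤ B.carrier)) = ⟦y.1⟧ := h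
      have := Quotient.exact this
      exact Quotient.sound (by rw [SubAddAction.orbitRel_of_subAdd]; exact this)
  lt_one_vadd x := B.lt_one_vadd x
  one_vadd_mono _ _ h := B.one_vadd_mono h
  cofinal x y := B.cofinal x y

end ParacyclicZSet

theorem bddAbove_range_of_vadd_invariant {G X α : Type*} [AddGroup G] [AddAction G X]
    [Finite (Quotient (AddAction.orbitRel G X))] [SemilatticeSup α] [Nonempty α] (d : X → α)
    (hd : ∀ (g : G) (x : X), d (g +ᵥ x) = d x) : BddAbove (Set.range d) := by
  have hd' : ∀ x y, AddAction.orbitRel G X x y → d x = d y := by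
    rintro x y ⟨g, rfl⟩
    exact hd g y
  rw [← Set.range_quotient_lift (s := AddAction.orbitRel G X) hd']
  exact (Set.finite_range _).bddAbove

theorem exists_int_equivariant {X : Type*} [AddAction ℤ X]
    (hfree : ∀ (n : ℤ) (x : X), n +ᵥ x = x → n = 0) :
    ∃ h : X → ℤ, ∀ (n : ℤ) (x : X), h (n +ᵥ x) = h x + n := by
  have vadd_injective : ∀ x : X, Function.Injective fun n : ℤ => n +ᵥ x := fun x m m' e => by
    have := hfree (-m' + m) x (by rw [add_vadd]; exact (congrArg _ e).trans (neg_vadd_vadd m' x))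
    omega
  have coord : ∀ x : X, ∃ n : ℤ, n +ᵥ (⟦x⟧ : Quotient (AddAction.orbitRel ℤ X)).out = x :=
    fun x => (AddAction.orbitRel ℤ X).symm (Quotient.mk_out x)
  choose h hh using coord
  refine ⟨h, fun n x => vadd_injective (⟦x⟧ : Quotient (AddAction.orbitRel ℤ X)).out ?_⟩
  have same_orbit : (⟦n +ᵥ x⟧ : Quotient (AddAction.orbitRel ℤ X)) = ⟦x⟧ := Quotient.sound ⟨n, rfl⟩
  have := hh (n +ᵥ x)
  rw [same_orbit] at this
  simp only [this, add_comm (h x), add_vadd, hh x]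

namespace CObj

variable {A : Type} [AddAction ℤ A]

def ofInt (h : A → ℤ) (hh : ∀ (n : ℤ) (a : A), h (n +ᵥ a) = h a + n) : CObj A :=
  ⟨.intScaled 1 one_pos, h, fun n a => show h (n +ᵥ a) = h a + 1 * n by rw [hh, one_mul]⟩

theorem exists_hom_ofInt (x : CObj A) :
    ∃ (h : A → ℤ) (hh : ∀ (n : ℤ) (a : A), h (n +ᵥ a) = h a + n), Nonempty (x ⟶ ofInt h hh) := by
  obtain ⟨g, hg, hmono⟩ := x.B.exists_monotone_int_equivariant
  refine ⟨g ∘ x.f, fun n a => by simp only [Function.comp_apply, x.equivariant, hg], ⟨?_⟩⟩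
  exact ⟨⟨g, fun n b => show g (n +ᵥ b) = g b + 1 * n by rw [hg, one_mul], hmono⟩, rfl⟩

/-- Since `h ≤ h' ≤ h + 1`, `h` and `h'` are the floor and ceiling halves of `h + h'`, which is
equivariant for the action of `ℤ` on `ℤ` by `n ↦ 2 * n`. -/
theorem zigzag_ofInt_of_le_of_le_add_one {h h' : A → ℤ}
    (hh : ∀ (n : ℤ) (a : A), h (n +ᵥ a) = h a + n) (hh' : ∀ (n : ℤ) (a : A), h' (n +ᵥ a) = h' a + n)
    (hle : ∀ a, h a ≤ h' a) (hle' : ∀ a, h' a ≤ h a + 1) : Zigzag (ofInt h hh) (ofInt h' hh') := by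
  let mid : CObj A := ⟨.intScaled 2 two_pos, h + h', fun n a =>
    show h (n +ᵥ a) + h' (n +ᵥ a) = h a + h' a + 2 * n by rw [hh, hh']; ring⟩
  have toLeft : mid ⟶ ofInt h hh :=
    ⟨⟨fun m : ℤ => m / 2, fun n (m : ℤ) => show (m + 2 * n) / 2 = m / 2 + 1 * n by omega,
      fun m m' hm => Int.ediv_le_ediv two_pos hm⟩,
     funext fun a => show (h a + h' a) / 2 = h a by have := hle a; have := hle' a; omega⟩
  have toRight : mid ⟶ ofInt h' hh' :=
    ⟨⟨fun m : ℤ => (m + 1) / 2,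
      fun n (m : ℤ) => show (m + 2 * n + 1) / 2 = (m + 1) / 2 + 1 * n by omega,
      fun (m m' : ℤ) (hm : m ≤ m') => Int.ediv_le_ediv two_pos (by omega)⟩,
     funext fun a => show (h a + h' a + 1) / 2 = h' a by have := hle a; have := hle' a; omega⟩
  exact Zigzag.of_inv_hom toLeft toRight

theorem zigzag_ofInt_of_le_of_le_add {h v : A → ℤ} (T : ℕ)
    (hh : ∀ (n : ℤ) (a : A), h (n +ᵥ a) = h a + n) (hv : ∀ (n : ℤ) (a : A), v (n +ᵥ a) = v a + n)
    (hle : ∀ a, h a ≤ v a) (hle' : ∀ a, v a ≤ h a + T) : Zigzag (ofInt h hh) (ofInt v hv) := by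
  induction T generalizing h with
  | zero =>
    obtain rfl : h = v := funext fun a => le_antisymm (hle a) (by simpa using hle' a)
    rfl
  | succ T ih =>
    let h₁ : A → ℤ := fun a => min (h a + 1) (v a)
    have hh₁ : ∀ (n : ℤ) (a : A), h₁ (n +ᵥ a) = h₁ a + n := fun n a => by
      simp only [h₁, hh, hv]; omega
    refine (zigzag_ofInt_of_le_of_le_add_one hh hh₁ (fun a => ?_) (fun a => ?_)).trans
      (ih hh₁ (fun a => min_le_right _ _) (fun a => ?_))
    · have := hle a; simp only [h₁]; omega
    · simp only [h₁]; omega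
    · have := hle' a; push_cast at this; simp only [h₁]; omega

theorem zigzag_ofInt [Finite (Quotient (AddAction.orbitRel ℤ A))] {h h' : A → ℤ}
    (hh : ∀ (n : ℤ) (a : A), h (n +ᵥ a) = h a + n)
    (hh' : ∀ (n : ℤ) (a : A), h' (n +ᵥ a) = h' a + n) : Zigzag (ofInt h hh) (ofInt h' hh') := by
  obtain ⟨M, hM⟩ := bddAbove_range_of_vadd_invariant (fun a => |h a - h' a|) fun (n : ℤ) a => by
    rw [hh, hh', add_sub_add_right_eq_sub]
  have hdist : ∀ a, |h a - h' a| ≤ M.toNat := fun a => (hM ⟨a, rfl⟩).trans (Int.self_le_toNat M)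
  let v : A → ℤ := fun a => max (h a) (h' a)
  have hv : ∀ (n : ℤ) (a : A), v (n +ᵥ a) = v a + n := fun n a => by
    simp only [v, hh, hh']; omega
  refine (zigzag_ofInt_of_le_of_le_add M.toNat hh hv (fun a => le_max_left _ _) fun a => ?_).trans
    (zigzag_ofInt_of_le_of_le_add M.toNat hh' hv (fun a => le_max_right _ _) fun a => ?_).symm
  all_goals have := abs_le.1 (hdist a); simp only [v]; omega

theorem zigzag [Finite (Quotient (AddAction.orbitRel ℤ A))] (x y : CObj A) : Zigzag x y := by
  obtain ⟨h, hh, ⟨f⟩⟩ := x.exists_hom_ofInt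
  obtain ⟨h', hh', ⟨g⟩⟩ := y.exists_hom_ofInt
  exact (Zigzag.of_hom f).trans ((zigzag_ofInt hh hh').trans (Zigzag.of_inv g))

def range (x : CObj A) : SubAddAction ℤ x.B.carrier where
  carrier := Set.range x.f
  vadd_mem' := by
    rintro n _ ⟨a, rfl⟩
    exact ⟨n +ᵥ a, x.equivariant n a⟩

def image (x : CObj A) : CSurj A :=
  ⟨⟨x.B.ofSubAddAction x.range, fun a => ⟨x.f a, a, rfl⟩,
      fun n a => Subtype.ext (x.equivariant n a)⟩,
    by rintro ⟨_, a, rfl⟩; exact ⟨a, rfl⟩⟩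

def imageFunctor : CObj A ⥤ CSurj A where
  obj := image
  map {x y} g := ⟨⟨fun b : x.range => ⟨g.1.1 b, by
      obtain ⟨a, ha⟩ := b.2
      exact ⟨a, by rw [← ha]; exact (congrFun g.2 a).symm⟩⟩,
    fun n (b : x.range) => Subtype.ext (g.1.2.1 n b), fun _ _ hb => g.1.2.2 hb⟩,
    funext fun _ => Subtype.ext (congrFun g.2 _)⟩

end CObj

def CSurj.toImage {A : Type} [AddAction ℤ A] (X : CSurj A) : X ⟶ CObj.imageFunctor.obj X.obj :=
  ⟨⟨fun b => ⟨b, X.property b⟩, fun _ _ => rfl, fun _ _ hb => hb⟩, rfl⟩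

/-- For every free `ℤ`-set `A` with finitely many orbits, the category `𝒞′_A` is connected:
it is nonempty, and any two of its objects can be joined by a finite zigzag of morphisms. -/
theorem csurj_connected (A : Type) [AddAction ℤ A]
    (hfree : ∀ (n : ℤ) (a : A), n +ᵥ a = a → n = 0)
    (hA : Finite (Quotient (AddAction.orbitRel ℤ A))) :
    Nonempty (CSurj A) ∧ ∀ x y : CSurj A, CategoryTheory.Zigzag x y := by
  obtain ⟨h, hh⟩ := exists_int_equivariant hfree
  refine ⟨⟨(CObj.ofInt h hh).image⟩, fun X Y => ?_⟩
  have := zigzag_obj_of_zigzag CObj.imageFunctor (CObj.zigzag X.obj Y.obj)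
  exact (Zigzag.of_hom X.toImage).trans (this.trans (Zigzag.of_inv Y.toImage))
end

section
/- Let FreeFinℤSet denote the category whose objects are free ℤ-sets with finitely many orbits and whose morphisms are ℤ-equivariant maps. The forgetful functor U : Λ∞ → FreeFinℤSet, which forgets the linear order, is a final functor in the 1-categorical sense: for every object A of FreeFinℤSet, the comma category of pairs (B, f) with B an object of Λ∞ and f : A → U(B) a morphism in FreeFinℤSet is connected (nonempty with any two objects joined by a zigzag of morphisms). -/
open CategoryTheory

/-- An object of the category `FreeFinℤSet`: a free `ℤ`-set with finitely many orbits. -/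
structure FreeFinZSet where
  carrier : Type
  [addAction : AddAction ℤ carrier]
  free : ∀ (n : ℤ) (b : carrier), n +ᵥ b = b → n = 0
  finOrbits : Finite (Quotient (AddAction.orbitRel ℤ carrier))

attribute [instance] FreeFinZSet.addAction

/-- Morphisms of `FreeFinℤSet` are the `ℤ`-equivariant maps. -/
instance : Category FreeFinZSet where
  Hom A B := {g : A.carrier → B.carrier //
    ∀ (n : ℤ) (a : A.carrier), g (n +ᵥ a) = n +ᵥ g a}
  id A := ⟨id, fun _ _ => rfl⟩
  comp f g := ⟨g.1 ∘ f.1, fun n a => by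
    simp only [Function.comp_apply, f.2, g.2]⟩
  id_comp f := Subtype.ext rfl
  comp_id f := Subtype.ext rfl
  assoc f g h := Subtype.ext rfl

/-- The forgetful functor `U : Λ∞ → FreeFinℤSet`, forgetting the linear order. -/
def forgetOrder : ParacyclicZSet ⥤ FreeFinZSet where
  obj B := { carrier := B.carrier, free := B.free, finOrbits := B.finOrbits }
  map g := ⟨g.1, g.2.1⟩
  map_id _ := Subtype.ext rfl
  map_comp _ _ := Subtype.ext rfl

/-!
Every paracyclic `ℤ`-set `B` has a monotone equivariant floor map `B → ℤ`, measuring each point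
against the orbit of a base point; so every object `(B, f)` of `A / U` maps to an object
`(ℤ, g)`, with `g : A → ℤ` equivariant. Two such `g, g'` differ by an orbit-invariant, hence
bounded, function. Comparing both with `min g g'` and moving up one step at a time reduces to
`g ≤ g' ≤ g + 1`, and then `(ℤ, g)` and `(ℤ, g')` are the halvings, rounded down and up, of the
single object `(½ℤ, g + g')`.
-/

section ShiftOrder

variable {α : Type*} [LinearOrder α] [AddAction ℤ α]

theorem strictMono_vadd_left_of_lt_one_vadd (h : ∀ b : α, b < (1 : ℤ) +ᵥ b) (b : α) :
    StrictMono fun n : ℤ => n +ᵥ b :=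
  strictMono_int_of_lt_succ fun n => by
    simpa only [add_comm n 1, add_vadd] using h (n +ᵥ b)

theorem monotone_natCast_vadd (h : Monotone fun b : α => (1 : ℤ) +ᵥ b) (k : ℕ) :
    Monotone fun b : α => (k : ℤ) +ᵥ b := by
  induction k with
  | zero => exact fun x y hxy => by simpa only [Nat.cast_zero, zero_vadd] using hxy
  | succ k ih =>
    intro x y hxy
    simpa only [Nat.cast_succ, add_comm _ (1 : ℤ), add_vadd] using h (ih hxy)

theorem vadd_le_vadd_iff_of_monotone (h : Monotone fun b : α => (1 : ℤ) +ᵥ b) (n : ℤ)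
    {x y : α} : n +ᵥ x ≤ n +ᵥ y ↔ x ≤ y := by
  obtain ⟨k, rfl | rfl⟩ := Int.eq_nat_or_neg n
  · exact ((monotone_natCast_vadd h k).strictMono_of_injective
      (AddAction.injective _)).le_iff_le
  · rw [← ((monotone_natCast_vadd h k).strictMono_of_injective
      (AddAction.injective _)).le_iff_le]
    simp only [vadd_neg_vadd]

end ShiftOrder

theorem eq_of_vadd_eq_vadd_of_free {G α : Type*} [AddGroup G] [AddAction G α]
    (hfree : ∀ (g : G) (b : α), g +ᵥ b = b → g = 0) {g g' : G} {x : α}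
    (h : g +ᵥ x = g' +ᵥ x) : g = g' := by
  have := hfree (-g' + g) x (by rw [add_vadd, h, neg_vadd_vadd])
  rwa [neg_add_eq_zero, eq_comm] at this

theorem exists_forall_le_of_vadd_invariant {G α : Type*} [AddGroup G] [AddAction G α]
    [Finite (AddAction.orbitRel.Quotient G α)] (d : α → ℤ)
    (hd : ∀ (g : G) (a : α), d (g +ᵥ a) = d a) : ∃ M, ∀ a, d a ≤ M := by
  obtain ⟨M, hM⟩ := Finite.exists_le (Quotient.lift (s := AddAction.orbitRel G α) d
    (by rintro a b ⟨g, rfl⟩; exact hd g b))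
  exact ⟨M, fun a => hM ⟦a⟧⟩

def intObj : ParacyclicZSet where
  carrier := ℤ
  free n b h := by simpa using h
  finOrbits := Finite.of_surjective (fun _ : Unit => ⟦0⟧) fun q =>
    q.inductionOn fun x => ⟨(), Quotient.sound ⟨-x, by simp⟩⟩
  lt_one_vadd b := by simp
  one_vadd_mono x y h := by simpa using h
  cofinal b b' := ⟨b' - b, by simp⟩

/-- `½ℤ` with translation, encoded as `ℤ` with `n` acting by `x ↦ 2 * n + x`. -/
def halfIntObj : ParacyclicZSet where
  carrier := ℤ
  addAction :=
    { vadd n x := 2 * n + x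
      zero_vadd x := by show 2 * 0 + x = x; ring
      add_vadd m n x := by show 2 * (m + n) + x = 2 * m + (2 * n + x); ring }
  free n b h := by
    have : 2 * n + b = b := h
    omega
  finOrbits := Finite.of_surjective (fun r : Fin 2 => ⟦(r : ℤ)⟧) fun q =>
    q.inductionOn fun x => ⟨⟨(x % 2).toNat, by omega⟩,
      Quotient.sound ⟨-(x / 2), show 2 * -(x / 2) + x = ((x % 2).toNat : ℤ) by omega⟩⟩
  lt_one_vadd b := show b < 2 * 1 + b by omega
  one_vadd_mono x y (h : x ≤ y) := show 2 * 1 + x ≤ 2 * 1 + y by omega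
  cofinal b b' := ⟨max (b' - b) 0, show b' ≤ 2 * max (b' - b) 0 + b by omega⟩

def halveHom (t : ℤ) : halfIntObj ⟶ intObj :=
  ⟨fun x : ℤ => (x + t) / 2,
    fun n (x : ℤ) => show (2 * n + x + t) / 2 = n + (x + t) / 2 by omega,
    fun (x y : ℤ) (h : x ≤ y) => show (x + t) / 2 ≤ (y + t) / 2 by omega⟩

namespace ParacyclicZSet

variable (B : ParacyclicZSet)

theorem exists_galoisConnection_vadd (b₀ : B.carrier) :
    ∃ φ : B.carrier → ℤ, GaloisConnection (· +ᵥ b₀) φ := by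
  have hmono {m m' : ℤ} : m +ᵥ b₀ ≤ m' +ᵥ b₀ ↔ m ≤ m' :=
    (strictMono_vadd_left_of_lt_one_vadd B.lt_one_vadd b₀).le_iff_le
  have hgreatest : ∀ b : B.carrier, ∃ m : ℤ, m +ᵥ b₀ ≤ b ∧ ∀ z : ℤ, z +ᵥ b₀ ≤ b → z ≤ m := by
    intro b
    refine Int.exists_greatest_of_bdd ?_ ?_
    · obtain ⟨N, hN⟩ := B.cofinal b₀ b
      exact ⟨N, fun z hz => hmono.mp (hz.trans hN)⟩
    · obtain ⟨N, hN⟩ := B.cofinal b b₀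
      refine ⟨-N, ?_⟩
      rwa [← vadd_le_vadd_iff_of_monotone B.one_vadd_mono N, vadd_neg_vadd]
  choose φ hφ using hgreatest
  exact ⟨φ, fun m b => ⟨(hφ b).2 m, fun hm => (hmono.mpr hm).trans (hφ b).1⟩⟩

theorem nonempty_hom_intObj : Nonempty (B ⟶ intObj) := by
  rcases isEmpty_or_nonempty B.carrier with hB | ⟨⟨b₀⟩⟩
  · exact ⟨⟨isEmptyElim, fun _ b => isEmptyElim b, fun b => isEmptyElim b⟩⟩
  obtain ⟨φ, gc⟩ := B.exists_galoisConnection_vadd b₀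
  refine ⟨⟨φ, fun n b => ?_, gc.monotone_u⟩⟩
  show φ (n +ᵥ b) = n + φ b
  refine eq_of_forall_le_iff fun m => ?_
  rw [← gc.le_iff_le, ← vadd_le_vadd_iff_of_monotone B.one_vadd_mono (-n), neg_vadd_vadd,
    ← add_vadd, gc.le_iff_le, neg_add_le_iff_le_add]

end ParacyclicZSet

namespace FreeFinZSet

theorem exists_equivariant_int (A : FreeFinZSet) :
    ∃ f : A.carrier → ℤ, ∀ (n : ℤ) (a : A.carrier), f (n +ᵥ a) = n + f a := by
  let rep (a : A.carrier) := (Quotient.mk (AddAction.orbitRel ℤ A.carrier) a).out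
  have hrep (a : A.carrier) : ∃ g : ℤ, g +ᵥ a = rep a :=
    AddAction.mem_orbit_iff.mp (Quotient.mk_out (s := AddAction.orbitRel ℤ A.carrier) a)
  choose g hg using hrep
  refine ⟨fun a => -g a, fun n a => ?_⟩
  have : g (n +ᵥ a) + n = g a := eq_of_vadd_eq_vadd_of_free A.free (x := a) <| by
    rw [add_vadd, hg, hg]
    exact congrArg Quotient.out (Quotient.sound ⟨n, rfl⟩)
  show -g (n +ᵥ a) = n + -g a
  omega

variable {A : FreeFinZSet}

def intArrow (f : A.carrier → ℤ) (hf : ∀ (n : ℤ) (a : A.carrier), f (n +ᵥ a) = n + f a) :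
    StructuredArrow A forgetOrder :=
  StructuredArrow.mk (Y := intObj) ⟨f, hf⟩

variable {f f' : A.carrier → ℤ} (hf : ∀ (n : ℤ) (a : A.carrier), f (n +ᵥ a) = n + f a)
  (hf' : ∀ (n : ℤ) (a : A.carrier), f' (n +ᵥ a) = n + f' a)

theorem zigzag_intArrow_of_le_of_le_add_one (h₁ : ∀ a, f a ≤ f' a)
    (h₂ : ∀ a, f' a ≤ f a + 1) : Zigzag (intArrow f hf) (intArrow f' hf') := by
  let e : A ⟶ forgetOrder.obj halfIntObj := ⟨fun a => f a + f' a, fun n a =>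
    show f (n +ᵥ a) + f' (n +ᵥ a) = 2 * n + (f a + f' a) by rw [hf, hf']; ring⟩
  refine Zigzag.of_inv_hom (j₂ := StructuredArrow.mk e)
    (StructuredArrow.homMk (halveHom 0) (Subtype.ext (funext fun a => ?_)))
    (StructuredArrow.homMk (halveHom 1) (Subtype.ext (funext fun a => ?_)))
  · show (f a + f' a + 0) / 2 = f a
    grind
  · show (f a + f' a + 1) / 2 = f' a
    grind

theorem zigzag_intArrow_of_le_of_le_add (M : ℕ) (h₁ : ∀ a, f a ≤ f' a)
    (h₂ : ∀ a, f' a ≤ f a + M) : Zigzag (intArrow f hf) (intArrow f' hf') := by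
  induction M generalizing f with
  | zero =>
    obtain rfl : f = f' := funext fun a => by grind
    rfl
  | succ M ih =>
    have hg (n : ℤ) (a : A.carrier) :
        min (f (n +ᵥ a) + 1) (f' (n +ᵥ a)) = n + min (f a + 1) (f' a) := by
      rw [hf, hf']; omega
    refine (zigzag_intArrow_of_le_of_le_add_one hf hg ?_ ?_).trans
      (ih (f := fun a => min (f a + 1) (f' a)) hg ?_ ?_) <;> intro a <;> grind

theorem zigzag_intArrow_of_le (h : ∀ a, f a ≤ f' a) :
    Zigzag (intArrow f hf) (intArrow f' hf') := by
  have := A.finOrbits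
  obtain ⟨M, hM⟩ := exists_forall_le_of_vadd_invariant (fun a => f' a - f a)
    fun n a => by rw [hf, hf']; ring
  exact zigzag_intArrow_of_le_of_le_add hf hf' M.toNat h fun a => by grind

theorem zigzag_intArrow : Zigzag (intArrow f hf) (intArrow f' hf') := by
  have hm (n : ℤ) (a : A.carrier) :
      min (f (n +ᵥ a)) (f' (n +ᵥ a)) = n + min (f a) (f' a) := by
    rw [hf, hf']; omega
  exact (zigzag_intArrow_of_le hm hf fun a => min_le_left _ _).symm.trans
    (zigzag_intArrow_of_le hm hf' fun a => min_le_right _ _)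

theorem exists_zigzag_intArrow (X : StructuredArrow A forgetOrder) :
    ∃ (f : A.carrier → ℤ) (hf : ∀ (n : ℤ) (a : A.carrier), f (n +ᵥ a) = n + f a),
      Zigzag X (intArrow f hf) := by
  obtain ⟨φ⟩ := X.right.nonempty_hom_intObj
  exact ⟨_, (X.hom ≫ forgetOrder.map φ).2, Zigzag.of_hom (StructuredArrow.homMk φ rfl)⟩

end FreeFinZSet

/-- The forgetful functor `U : Λ∞ → FreeFinℤSet` is a final functor in the 1-categorical
sense: for every free `ℤ`-set `A` with finitely many orbits, the comma category of pairs
`(B, f)` with `B` in `Λ∞` and `f : A → U(B)` `ℤ`-equivariant is connected. -/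
theorem forgetOrder_final : forgetOrder.Final := by
  refine ⟨fun A => ?_⟩
  obtain ⟨f₀, hf₀⟩ := A.exists_equivariant_int
  have : Nonempty (StructuredArrow A forgetOrder) := ⟨FreeFinZSet.intArrow f₀ hf₀⟩
  refine zigzag_isConnected fun X Y => ?_
  obtain ⟨f, hf, hX⟩ := FreeFinZSet.exists_zigzag_intArrow X
  obtain ⟨g, hg, hY⟩ := FreeFinZSet.exists_zigzag_intArrow Y
  exact hX.trans ((FreeFinZSet.zigzag_intArrow hf hg).trans hY.symm)
end

section
/- Let F, F′, E, E′, G, G′ be small categories and let V be a cocomplete category. Let α : F → E, φ : F → G, α′ : F′ → E′, φ′ : F′ → G′, e : E → E′, f : F → F′ and g : G → G′ be functors, together with natural isomorphisms e ∘ α ≅ α′ ∘ f and φ′ ∘ f ≅ g ∘ φ. For X an object of G, write φ/X for the comma category whose objects are pairs (d, s) with d an object of F and s : φ(d) → X, and let T_X : φ/X → φ′/g(X) be the functor induced by f, g and the natural isomorphism φ′ ∘ f ≅ g ∘ φ. Assume that T_X is a final functor for every object X of G. Then for every functor H : E′ → V and every object X of G there is an isomorphism colim over φ′/g(X) of H ∘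 α′ ∘ pr ≅ colim over φ/X of (H ∘ e) ∘ α ∘ pr (where pr denotes the projection of the comma category to F′ resp. F), and this isomorphism is natural in H. -/
open CategoryTheory Limits

/-- Given a map of spans of categories `(E ← F → G) → (E′ ← F′ → G′)` (only the data over
`G` is needed) and an object `X` of `G`, the induced functor `T_X : φ/X → φ′/g(X)` between
comma categories. -/
def inducedCommaFunctor {F F' G G' : Type} [SmallCategory F] [SmallCategory F']
    [SmallCategory G] [SmallCategory G'] (φ : F ⥤ G) (φ' : F' ⥤ G')
    (f : F ⥤ F') (g : G ⥤ G') (η : f ⋙ φ' ≅ φ ⋙ g) (X : G) :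
    CostructuredArrow φ X ⥤ CostructuredArrow φ' (g.obj X) where
  obj d := CostructuredArrow.mk (η.hom.app d.left ≫ g.map d.hom)
  map {d d'} k := CostructuredArrow.homMk (f.map k.left) (by
    have h := η.hom.naturality k.left
    dsimp at h ⊢
    rw [reassoc_of% h, ← g.map_comp, CostructuredArrow.w k])

/-! The functor `T_X` lies over `f`, so restricting the diagram `H ∘ α′ ∘ pr` along it gives
`H ∘ α′ ∘ f ∘ pr`, which `η₁` identifies with `H ∘ e ∘ α ∘ pr`. Restriction along a final functor
does not change colimits, naturally in the diagram, and hence naturally in `H`. -/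

namespace CategoryTheory.Functor.Final

variable {C D E V : Type*} [Category C] [Category D] [Category E] [Category V]
  [HasColimitsOfShape C V] [HasColimitsOfShape D V]

noncomputable def colimWhiskeringLeftIso (T : C ⥤ D) [T.Final] {P : D ⥤ E} {Q : C ⥤ E} (i : T ⋙ P ≅ Q) :
    (whiskeringLeft D E V).obj P ⋙ colim ≅ (whiskeringLeft C E V).obj Q ⋙ colim :=
  isoWhiskerLeft ((whiskeringLeft D E V).obj P) (colimIso T).symm ≪≫
    isoWhiskerRight ((whiskeringLeft C E V).mapIso i) colim

end CategoryTheory.Functor.Final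

def inducedCommaFunctorCompProjIso {F F' E E' G G' : Type} [SmallCategory F] [SmallCategory F']
    [Category E] [Category E'] [SmallCategory G] [SmallCategory G']
    (α : F ⥤ E) (φ : F ⥤ G) (α' : F' ⥤ E') (φ' : F' ⥤ G') (e : E ⥤ E') (f : F ⥤ F') (g : G ⥤ G')
    (η₁ : α ⋙ e ≅ f ⋙ α') (η₂ : f ⋙ φ' ≅ φ ⋙ g) (X : G) :
    inducedCommaFunctor φ φ' f g η₂ X ⋙ CostructuredArrow.proj φ' (g.obj X) ⋙ α' ≅
      CostructuredArrow.proj φ X ⋙ α ⋙ e :=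
  Functor.isoWhiskerLeft (CostructuredArrow.proj φ X) η₁.symm

/-- Comparison of natural operations along a map of spans.  Let `α : F → E`, `φ : F → G`,
`α′ : F′ → E′`, `φ′ : F′ → G′` be two spans, `e, f, g` a map between them (up to natural
isomorphism), and suppose all the induced functors `T_X : φ/X → φ′/g(X)` are final.  Then
for every `X` in `G` there is an isomorphism, natural in `H : E′ ⥤ V`,
`colim_{φ′/g(X)} H ∘ α′ ∘ pr ≅ colim_{φ/X} (H ∘ e) ∘ α ∘ pr`. -/
theorem natural_operations_comparison {F F' E E' G G' : Type}
    [SmallCategory F] [SmallCategory F'] [SmallCategory E] [SmallCategory E']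
    [SmallCategory G] [SmallCategory G']
    {V : Type*} [Category V] [HasColimitsOfSize.{0, 0} V]
    (α : F ⥤ E) (φ : F ⥤ G) (α' : F' ⥤ E') (φ' : F' ⥤ G')
    (e : E ⥤ E') (f : F ⥤ F') (g : G ⥤ G')
    (η₁ : α ⋙ e ≅ f ⋙ α') (η₂ : f ⋙ φ' ≅ φ ⋙ g)
    (hfinal : ∀ X : G, (inducedCommaFunctor φ φ' f g η₂ X).Final) (X : G) :
    Nonempty
      (((Functor.whiskeringLeft (CostructuredArrow φ' (g.obj X)) E' V).obj
          (CostructuredArrow.proj φ' (g.obj X) ⋙ α') ⋙ colim) ≅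
        ((Functor.whiskeringLeft (CostructuredArrow φ X) E' V).obj
          (CostructuredArrow.proj φ X ⋙ α ⋙ e) ⋙ colim)) := by
  have := hfinal X
  exact ⟨Functor.Final.colimWhiskeringLeftIso (inducedCommaFunctor φ φ' f g η₂ X)
    (inducedCommaFunctorCompProjIso α φ α' φ' e f g η₁ η₂ X)⟩
end
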